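/- arXiv:1006.5687 — 2 statements merged into one kernel-verified Lean document; each statement's English description precedes it below -/
import Mathlib

section
/- Let M be a commutative monoid, and for a subset I ⊆ M write V(I) = {p ∈ Spec(M) : p ⊇ I}. If I is the intersection of a nonempty family of prime ideals of M, then V(I) is an irreducible closed subset of Spec(M) if and only if I is a prime ideal of M. Moreover, for every prime ideal p of M, V(p) equals the closure of the singleton {p} in Spec(M). Consequently, the irreducible closed subsets of Spec(M) are precisely the sets V(p) with p prime. -/
open Set Topology TopologicalSpace

universe u v

/-- An ideal of a commutative monoid: closed under multiplication by arbitrary elements. -/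
def IsMonoidIdeal {M : Type*} [CommMonoid M] (I : Set M) : Prop :=
  ∀ x ∈ I, ∀ m : M, x * m ∈ I

/-- A prime ideal of a commutative monoid: an ideal whose complement is a submonoid
(contains `1` and is closed under multiplication). -/
def IsMonoidPrime {M : Type*} [CommMonoid M] (p : Set M) : Prop :=
  IsMonoidIdeal p ∧ (1 : M) ∉ p ∧ ∀ x y : M, x ∉ p → y ∉ p → x * y ∉ p

/-- The Kato spectrum of a commutative monoid: the set of its prime ideals. -/
def KatoSpec (M : Type*) [CommMonoid M] : Type _ :=
  {p : Set M // IsMonoidPrime p}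

/-- The basic open set `D(f) = {p : f ∉ p}`. -/
def KatoD {M : Type*} [CommMonoid M] (f : M) : Set (KatoSpec M) :=
  {p | f ∉ p.1}

/-- The topology on the Kato spectrum, generated by the sets `D(f)`. -/
instance KatoSpec.instTopologicalSpace (M : Type*) [CommMonoid M] :
    TopologicalSpace (KatoSpec M) :=
  TopologicalSpace.generateFrom (Set.range fun f : M => KatoD f)

/-- A blob: the intersection of all open sets containing some point `a`. -/
def IsBlob {X : Type*} [TopologicalSpace X] (A : Set X) : Prop :=
  ∃ a : X, A = ⋂₀ {U : Set X | IsOpen U ∧ a ∈ U}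

/-- Condition (*): whenever an intersection of a family of open blobs is contained in an
open set `V`, some finite subfamily already has intersection contained in `V`. -/
def CondStar (X : Type*) [TopologicalSpace X] : Prop :=
  ∀ S : Set (Set X), (∀ U ∈ S, IsOpen U ∧ IsBlob U) →
    ∀ V : Set X, IsOpen V → ⋂₀ S ⊆ V →
      ∃ T : Finset (Set X), ↑T ⊆ S ∧ ⋂₀ (T : Set (Set X)) ⊆ V

/-- A monoidal base: a base of open sets containing the whole space and closed under
finite (binary) intersections. -/
structure IsMonoidalBase {X : Type*} [TopologicalSpace X] (B : Set (Set X)) : Prop where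
  open_mem : ∀ U ∈ B, IsOpen U
  is_base : ∀ V : Set X, IsOpen V → ∀ x ∈ V, ∃ U ∈ B, x ∈ U ∧ U ⊆ V
  univ_mem : Set.univ ∈ B
  inter_mem : ∀ U ∈ B, ∀ V ∈ B, U ∩ V ∈ B

/-- `(X, B)` is an 𝕄-complete join semilattice with respect to the explicit data of
a partial order `le` and a supremum operator `s`. -/
def IsMCJSWith {X : Type*} (B : Set (Set X)) (le : X → X → Prop) (s : Set X → X) : Prop :=
  (∀ x, le x x) ∧
  (∀ x y z, le x y → le y z → le x z) ∧
  (∀ x y, le x y → le y x → x = y) ∧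
  (∀ A : Set X, (∀ a ∈ A, le a (s A)) ∧ ∀ b : X, (∀ a ∈ A, le a b) → le (s A) b) ∧
  (∀ A : Set X, ∀ U ∈ B, (A ⊆ U ↔ s A ∈ U))

/-- `(X, B)` is an 𝕄-complete join semilattice: there is a partial order on `X` in which
every subset has a least upper bound, such that for `U ∈ B`, `A ⊆ U ↔ sup A ∈ U`. -/
def MCJS {X : Type*} (B : Set (Set X)) : Prop :=
  ∃ (le : X → X → Prop) (s : Set X → X), IsMCJSWith B le s

/-- An isomorphism of spaces-with-monoidal-bases: a bijection such that both it and its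
inverse pull back base elements to base elements. -/
def MIso {X Y : Type*} (B : Set (Set X)) (C : Set (Set Y)) : Prop :=
  ∃ f : X → Y, Function.Bijective f ∧ (∀ V ∈ C, f ⁻¹' V ∈ B) ∧ (∀ U ∈ B, f '' U ∈ C)

/-- The topology on the power set `𝒫(X)` generated by the sets `𝒫(U) = {A | A ⊆ U}`, `U ∈ B`. -/
def ExpTop {X : Type*} (B : Set (Set X)) : TopologicalSpace (Set X) :=
  TopologicalSpace.generateFrom {s : Set (Set X) | ∃ U ∈ B, s = {A : Set X | A ⊆ U}}

/-- The equivalence relation `A ∼ A'` iff `A` and `A'` belong to the same open sets of `𝒫(X)`. -/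
def ExpSetoid {X : Type*} (B : Set (Set X)) : Setoid (Set X) where
  r A A' := ∀ s : Set (Set X), (ExpTop B).IsOpen s → (A ∈ s ↔ A' ∈ s)
  iseqv := ⟨fun _ _ _ => Iff.rfl, fun h s hs => (h s hs).symm,
    fun h h' s hs => (h s hs).trans (h' s hs)⟩

/-- The exponential `E(X,B)`: the quotient of `𝒫(X)` identifying sets lying in the same
open sets. -/
def ExpSpace {X : Type*} (B : Set (Set X)) : Type _ :=
  Quotient (ExpSetoid B)

/-- The class `[A]` of a subset `A ⊆ X` in `E(X,B)`. -/
def expMk {X : Type*} (B : Set (Set X)) (A : Set X) : ExpSpace B :=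
  Quotient.mk (ExpSetoid B) A

/-- The quotient topology on `E(X,B)`. -/
instance ExpSpace.instTopologicalSpace {X : Type*} (B : Set (Set X)) :
    TopologicalSpace (ExpSpace B) :=
  (ExpTop B).coinduced (expMk B)

/-- The basic subset `Ũ = {[A] : A ⊆ U}` of `E(X,B)`. -/
def expBasic {X : Type*} (B : Set (Set X)) (U : Set X) : Set (ExpSpace B) :=
  {q | ∃ A : Set X, q = expMk B A ∧ A ⊆ U}

/-- The monoidal base `B̃ = {Ũ : U ∈ B}` of `E(X,B)`. -/
def expBase {X : Type*} (B : Set (Set X)) : Set (Set (ExpSpace B)) :=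
  {s | ∃ U ∈ B, s = expBasic B U}

/-- The natural map `i : X → E(X,B)`, `x ↦ [{x}]`. -/
def expI {X : Type*} (B : Set (Set X)) (x : X) : ExpSpace B :=
  expMk B {x}

/-- The canonical supremum in `E(X,B)`: the class of the union of all representatives. -/
def expSup {X : Type*} (B : Set (Set X)) (S : Set (ExpSpace B)) : ExpSpace B :=
  expMk B (⋃₀ {A : Set X | expMk B A ∈ S})

/-- The specialization order: `a ≤ b` iff `b ∈ closure {a}`. -/
def specLE {Y : Type*} [TopologicalSpace Y] (a b : Y) : Prop :=
  b ∈ closure {a}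

/-- The commutative monoid `(B, ∩)` attached to a monoidal base `B`, with identity `X`. -/
def baseMonoid {X : Type*} [TopologicalSpace X] {B : Set (Set X)} (hB : IsMonoidalBase B) :
    CommMonoid ↥B where
  mul U V := ⟨U.1 ∩ V.1, hB.inter_mem _ U.2 _ V.2⟩
  one := ⟨Set.univ, hB.univ_mem⟩
  mul_assoc U V W := Subtype.ext (Set.inter_assoc _ _ _)
  mul_comm U V := Subtype.ext (Set.inter_comm _ _)
  one_mul U := Subtype.ext (Set.univ_inter _)
  mul_one U := Subtype.ext (Set.inter_univ _)


/-- `V(I) = {p ∈ Spec(M) : I ⊆ p}`. -/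
def KatoV {M : Type*} [CommMonoid M] (I : Set M) : Set (KatoSpec M) :=
  {p | I ⊆ p.1}

lemma katoD_isOpen {M : Type u} [CommMonoid M] (f : M) : IsOpen (KatoD f) :=
  TopologicalSpace.GenerateOpen.basic _ ⟨f, rfl⟩

lemma katoV_isClosed {M : Type u} [CommMonoid M] (I : Set M) : IsClosed (KatoV I) := by
  have : KatoV I = (⋃ f ∈ I, KatoD f)ᶜ := by
    ext p
    simp only [KatoV, Set.mem_setOf_eq, Set.mem_compl_iff, Set.mem_iUnion, KatoD, not_exists]
    constructor
    · intro h f hf hfp; exact hfp (h hf)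
    · intro h f hf; by_contra hc; exact h f hf hc
  rw [this]
  exact (isOpen_biUnion fun f _ => katoD_isOpen f).isClosed_compl

/-- Open sets are upward-stable w.r.t. reverse inclusion of primes. -/
lemma kato_open_mono {M : Type u} [CommMonoid M] {U : Set (KatoSpec M)} (hU : IsOpen U) :
    ∀ p q : KatoSpec M, p.1 ⊆ q.1 → q ∈ U → p ∈ U := by
  induction hU with
  | basic s hs =>
    obtain ⟨f, rfl⟩ := hs
    intro p q hpq hq hfp
    exact hq (hpq hfp)
  | univ => intro p q _ _; trivial
  | inter s t _ _ ihs iht =>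
    intro p q hpq hq
    exact ⟨ihs p q hpq hq.1, iht p q hpq hq.2⟩
  | sUnion S _ ih =>
    intro p q hpq hq
    obtain ⟨s, hs, hqs⟩ := hq
    exact ⟨s, hs, ih s hs p q hpq hqs⟩

/-- The sets `D f` form a basis. -/
lemma kato_basis {M : Type u} [CommMonoid M] {U : Set (KatoSpec M)} (hU : IsOpen U) :
    ∀ p ∈ U, ∃ f : M, p ∈ KatoD f ∧ KatoD f ⊆ U := by
  induction hU with
  | basic s hs =>
    obtain ⟨f, rfl⟩ := hs
    intro p hp; exact ⟨f, hp, fun _ h => h⟩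
  | univ =>
    intro p _
    refine ⟨1, p.2.2.1, fun _ _ => trivial⟩
  | inter s t _ _ ihs iht =>
    intro p hp
    obtain ⟨f, hpf, hfs⟩ := ihs p hp.1
    obtain ⟨g, hpg, hgt⟩ := iht p hp.2
    refine ⟨f * g, p.2.2.2 f g hpf hpg, fun q hq => ?_⟩
    have hf : f ∉ q.1 := fun h => hq (q.2.1 f h g)
    have hg : g ∉ q.1 := fun h => hq (by simpa [mul_comm] using q.2.1 g h f)
    exact ⟨hfs hf, hgt hg⟩
  | sUnion S _ ih =>
    intro p hp
    obtain ⟨s, hs, hps⟩ := hp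
    obtain ⟨f, hpf, hfs⟩ := ih s hs p hps
    exact ⟨f, hpf, fun q hq => ⟨s, hs, hfs hq⟩⟩

lemma kato_mem_closure {M : Type u} [CommMonoid M] (p q : KatoSpec M) :
    q ∈ closure ({p} : Set (KatoSpec M)) ↔ p.1 ⊆ q.1 := by
  rw [mem_closure_iff]
  constructor
  · intro h f hfp
    by_contra hfq
    obtain ⟨x, hx1, hx2⟩ := h (KatoD f) (katoD_isOpen f) hfq
    rw [Set.mem_singleton_iff] at hx2
    subst hx2
    exact hx1 hfp
  · intro h U hU hqU
    exact ⟨p, kato_open_mono hU p q h hqU, rfl⟩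

lemma katoV_eq_closure {M : Type u} [CommMonoid M] (p : KatoSpec M) :
    KatoV p.1 = closure ({p} : Set (KatoSpec M)) := by
  ext q
  rw [kato_mem_closure]
  rfl

/-- for `I` an intersection of a nonempty family of prime ideals, `V(I)`
is irreducible closed iff `I` is prime; `V(p) = cl {p}` for `p` prime; hence the irreducible
closed subsets of `Spec(M)` are exactly the `V(p)` for `p` prime. -/
theorem stmt14 {M : Type u} [CommMonoid M] :
    (∀ I : Set M,
      (∃ P : Set (Set M), P.Nonempty ∧ (∀ p ∈ P, IsMonoidPrime p) ∧ I = ⋂₀ P) →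
      ((IsClosed (KatoV I) ∧ IsIrreducible (KatoV I)) ↔ IsMonoidPrime I)) ∧
    (∀ p : KatoSpec M, KatoV p.1 = closure {p}) ∧
    (∀ C : Set (KatoSpec M),
      (IsClosed C ∧ IsIrreducible C) ↔ ∃ p : KatoSpec M, C = KatoV p.1) := by
  have main : ∀ I : Set M,
      (∃ P : Set (Set M), P.Nonempty ∧ (∀ p ∈ P, IsMonoidPrime p) ∧ I = ⋂₀ P) →
      ((IsClosed (KatoV I) ∧ IsIrreducible (KatoV I)) ↔ IsMonoidPrime I) := by
    intro I ⟨P, ⟨p₀, hp₀⟩, hP, hIP⟩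
    constructor
    · rintro ⟨-, hirr⟩
      have hideal : IsMonoidIdeal I := by
        intro x hx m
        subst hIP
        intro p hp
        exact (hP p hp).1 x (hx p hp) m
      have hone : (1 : M) ∉ I := by
        subst hIP
        intro h
        exact (hP p₀ hp₀).2.1 (h p₀ hp₀)
      refine ⟨hideal, hone, fun x y hx hy hxy => ?_⟩
      have hcover : KatoV I ⊆ (KatoD x)ᶜ ∪ (KatoD y)ᶜ := by
        intro q hq
        by_cases hxq : x ∈ q.1
        · exact Or.inl (by simpa [KatoD] using hxq)
        by_cases hyq : y ∈ q.1
        · exact Or.inr (by simpa [KatoD] using hyq)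
        exact absurd (hq hxy) (q.2.2.2 x y hxq hyq)
      have := (isPreirreducible_iff_isClosed_union_isClosed.mp hirr.2) _ _
        (katoD_isOpen x).isClosed_compl (katoD_isOpen y).isClosed_compl hcover
      rcases this with h | h
      · apply hx
        subst hIP
        intro p hp
        have hpV : (⟨p, hP p hp⟩ : KatoSpec M) ∈ KatoV (⋂₀ P) :=
          fun f hf => hf p hp
        have := h hpV
        exact Classical.byContradiction fun hc => this hc
      · apply hy
        subst hIP
        intro p hp
        have hpV : (⟨p, hP p hp⟩ : KatoSpec M) ∈ KatoV (⋂₀ P) :=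
          fun f hf => hf p hp
        have := h hpV
        exact Classical.byContradiction fun hc => this hc
    · intro hI
      have : KatoV I = closure ({(⟨I, hI⟩ : KatoSpec M)} : Set (KatoSpec M)) :=
        katoV_eq_closure ⟨I, hI⟩
      refine ⟨katoV_isClosed I, ?_⟩
      rw [this]
      exact isIrreducible_singleton.closure
  refine ⟨main, katoV_eq_closure, fun C => ?_⟩
  constructor
  · rintro ⟨hCcl, hCirr⟩
    set I : Set M := {f | ∀ q ∈ C, f ∈ q.1} with hIdef
    have hCV : C = KatoV I := by
      apply Set.Subset.antisymm
      · intro q hq f hf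
        exact hf q hq
      · intro p hp
        by_contra hpC
        obtain ⟨f, hpf, hfC⟩ := kato_basis hCcl.isOpen_compl p hpC
        have hfI : f ∈ I := by
          intro q hq
          by_contra hfq
          exact hfC hfq hq
        exact hpf (hp hfI)
    obtain ⟨q₀, hq₀⟩ := hCirr.1
    have hIinter : I = ⋂₀ (Subtype.val '' C) := by
      ext f
      simp only [Set.mem_sInter, Set.mem_image, hIdef, Set.mem_setOf_eq]
      constructor
      · rintro h s ⟨q, hq, rfl⟩; exact h q hq
      · intro h q hq; exact h q.1 ⟨q, hq, rfl⟩
    have hprime : IsMonoidPrime I := by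
      refine (main I ⟨Subtype.val '' C, ⟨q₀.1, ⟨q₀, hq₀, rfl⟩⟩,
        ?_, hIinter⟩).mp ?_
      · rintro p ⟨q, _, rfl⟩; exact q.2
      · rw [← hCV]; exact ⟨hCcl, hCirr⟩
    exact ⟨⟨I, hprime⟩, hCV⟩
  · rintro ⟨p, rfl⟩
    refine ⟨katoV_isClosed _, ?_⟩
    rw [katoV_eq_closure]
    exact isIrreducible_singleton.closure
end

section
/- Let M be a commutative monoid and let B = {D(f) : f ∈ M}, regarded as a commutative monoid (B, ∩) under intersection with identity element Spec(M). Then Spec(M) is homeomorphic to Spec(B, ∩). In particular, every Kato spectrum of a commutative monoid is homeomorphic to the Kato spectrum of an idempotent commutative monoid (a semilattice with greatest element). -/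
open Set Topology TopologicalSpace

universe u v

lemma katoD_mul {M : Type*} [CommMonoid M] (f g : M) :
    KatoD (f * g) = KatoD f ∩ KatoD g := by
  ext p
  obtain ⟨hI, h1, hmul⟩ := p.2
  simp only [KatoD, Set.mem_setOf_eq, Set.mem_inter_iff]
  constructor
  · intro h
    refine ⟨fun hf => h ?_, fun hg => h ?_⟩
    · exact hI f hf g
    · simpa [mul_comm] using hI g hg f
  · rintro ⟨hf, hg⟩
    exact hmul f g hf hg

lemma katoD_one {M : Type*} [CommMonoid M] :
    KatoD (1 : M) = (Set.univ : Set (KatoSpec M)) := by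
  ext p
  simpa [KatoD] using p.2.2.1

/-- The base `B = {D(f) : f ∈ M}` of `Spec(M)`. -/
def dBase (M : Type*) [CommMonoid M] : Set (Set (KatoSpec M)) :=
  Set.range fun f : M => KatoD f

/-- The commutative monoid `(B, ∩)` on `B = {D(f) : f ∈ M}`, with identity `Spec(M)`. -/
def dBaseMonoid (M : Type*) [CommMonoid M] : CommMonoid ↥(dBase M) where
  mul U V := ⟨U.1 ∩ V.1, by
    obtain ⟨f, hf⟩ := U.2
    obtain ⟨g, hg⟩ := V.2
    have hf' : KatoD f = U.1 := hf
    have hg' : KatoD g = V.1 := hg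
    exact ⟨f * g, show KatoD (f * g) = _ by rw [katoD_mul, hf', hg']⟩⟩
  one := ⟨Set.univ, ⟨1, katoD_one⟩⟩
  mul_assoc U V W := Subtype.ext (Set.inter_assoc _ _ _)
  mul_comm U V := Subtype.ext (Set.inter_comm _ _)
  one_mul U := Subtype.ext (Set.univ_inter _)
  mul_one U := Subtype.ext (Set.inter_univ _)

namespace Stmt15Aux

attribute [local instance] dBaseMonoid

variable {M : Type u} [CommMonoid M]

/-- The element of `↥(dBase M)` corresponding to `D(f)`. -/
def dElem (f : M) : ↥(dBase M) := ⟨KatoD f, ⟨f, rfl⟩⟩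

lemma mul_val (U V : ↥(dBase M)) : ((U * V : ↥(dBase M)) : Set (KatoSpec M)) = ↑U ∩ ↑V := rfl

lemma one_val : ((1 : ↥(dBase M)) : Set (KatoSpec M)) = Set.univ := rfl

lemma dElem_mul (f g : M) : dElem (f * g) = dElem f * dElem g :=
  Subtype.ext (katoD_mul f g)

lemma dElem_one : dElem (1 : M) = 1 := Subtype.ext katoD_one

/-- The forward map `Spec(M) → Spec(B)`. -/
def phi (p : KatoSpec M) : KatoSpec ↥(dBase M) :=
  ⟨{U | p ∉ (U : Set (KatoSpec M))},
    ⟨fun U hU V hUV => hU hUV.1,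
     fun h => h (Set.mem_univ p),
     fun U V hU hV hUV => hUV ⟨not_not.mp hU, not_not.mp hV⟩⟩⟩

/-- The backward map `Spec(B) → Spec(M)`. -/
def psi (q : KatoSpec ↥(dBase M)) : KatoSpec M :=
  ⟨{f | dElem f ∈ q.1},
    ⟨fun f hf m => by
        show dElem (f * m) ∈ q.1
        rw [dElem_mul]
        exact q.2.1 _ hf _,
     by
        show dElem (1 : M) ∉ q.1
        rw [dElem_one]
        exact q.2.2.1,
     fun f g hf hg => by
        show dElem (f * g) ∉ q.1
        rw [dElem_mul]
        exact q.2.2.2 _ _ hf hg⟩⟩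

lemma psi_phi (p : KatoSpec M) : psi (phi p) = p := by
  apply Subtype.ext
  ext f
  show p ∉ KatoD f ↔ f ∈ p.1
  simp [KatoD]

lemma phi_psi (q : KatoSpec ↥(dBase M)) : phi (psi q) = q := by
  apply Subtype.ext
  ext U
  obtain ⟨f, hf⟩ := U.2
  have hU : dElem f = U := Subtype.ext hf
  show psi q ∉ (U : Set (KatoSpec M)) ↔ U ∈ q.1
  rw [← hU]
  show psi q ∉ KatoD f ↔ _
  simp only [KatoD, Set.mem_setOf_eq, not_not]
  rfl

lemma continuous_phi : Continuous (phi (M := M)) := by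
  rw [KatoSpec.instTopologicalSpace, continuous_generateFrom_iff]
  rintro s ⟨U, rfl⟩
  have : phi ⁻¹' KatoD U = (U : Set (KatoSpec M)) := by
    ext p
    show ¬ p ∉ (U : Set (KatoSpec M)) ↔ _
    exact not_not
  rw [this]
  obtain ⟨f, hf⟩ := U.2
  rw [← hf]
  exact TopologicalSpace.GenerateOpen.basic _ ⟨f, rfl⟩

lemma continuous_psi : Continuous (psi (M := M)) := by
  rw [KatoSpec.instTopologicalSpace, continuous_generateFrom_iff]
  rintro s ⟨f, rfl⟩
  have : psi ⁻¹' KatoD f = KatoD (dElem f) := by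
    ext q
    rfl
  rw [this]
  exact TopologicalSpace.GenerateOpen.basic _ ⟨dElem f, rfl⟩

/-- The homeomorphism `Spec(M) ≃ₜ Spec(B, ∩)`. -/
def homeo : KatoSpec M ≃ₜ KatoSpec ↥(dBase M) where
  toFun := phi
  invFun := psi
  left_inv := psi_phi
  right_inv := phi_psi
  continuous_toFun := continuous_phi
  continuous_invFun := continuous_psi

end Stmt15Aux

/-- `Spec(M)` is homeomorphic to `Spec(B, ∩)` where `B = {D(f) : f ∈ M}`;
the monoid `(B, ∩)` is idempotent, so every Kato spectrum is homeomorphic to the Kato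
spectrum of an idempotent commutative monoid (a semilattice with greatest element). -/
theorem stmt15 {M : Type u} [CommMonoid M] :
    letI : CommMonoid ↥(dBase M) := dBaseMonoid M
    Nonempty (KatoSpec M ≃ₜ KatoSpec ↥(dBase M)) ∧
    (∀ U : ↥(dBase M), U * U = U) ∧
    ∃ (N : Type u) (_ : CommMonoid N),
      (∀ x : N, x * x = x) ∧ Nonempty (KatoSpec M ≃ₜ KatoSpec N) := by
  letI : CommMonoid ↥(dBase M) := dBaseMonoid M
  have hidem : ∀ U : ↥(dBase M), U * U = U := fun U => Subtype.ext (Set.inter_self _)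
  exact ⟨⟨Stmt15Aux.homeo⟩, hidem, ↥(dBase M), dBaseMonoid M, hidem, ⟨Stmt15Aux.homeo⟩⟩
end
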